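/- arXiv:math/0202109 — 5 statements merged into one kernel-verified Lean document; each statement's English description precedes it below -/
import Mathlib

section
/- Let R be a ring with involution, i.e. an additive-group endomorphism a ↦ a* with (ab)* = b*a* and a** = a for all a, b ∈ R. Let p ∈ R be an idempotent (p² = p) and suppose the element u := 1 − (p − p*)² is invertible in R. Then P := p·p*·u^{-1} is a projection, i.e. P² = P and P* = P, and P is von Neumann equivalent to p; more precisely p·P = P and P·p = p, so that with x := P and y := p one has x·y = p and y·x = P. -/
private lemma stmt7_aux_left {R : Type*} [Ring R] (p q : R) (hp : p * p = p)
    (hq : q * q = q) : p * (1 - (p - q) ^ 2) = p * q * p := by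
  have e : p * (1 - (p - q) ^ 2) = p - p*p*p + p*p*q + p*q*p - p*(q*q) := by noncomm_ring
  rw [e, show p*p*p = p by rw [hp, hp], show p*p*q = p*q by rw [hp], hq]; abel

private lemma stmt7_aux_right {R : Type*} [Ring R] (p q : R) (hp : p * p = p)
    (hq : q * q = q) : (1 - (p - q) ^ 2) * p = p * q * p := by
  have e : (1 - (p - q) ^ 2) * p = p - p*p*p + p*q*p + q*p*p - q*q*p := by noncomm_ring
  rw [e, show p*p*p = p by rw [hp, hp], show q*p*p = q*p by rw [mul_assoc, hp],
    show q*q*p = q*p by rw [hq]]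
  abel

/-- Section 1.5: in a ring with involution, if `p` is an idempotent
and `u = 1 − (p − p*)²` is invertible, then `P = p·p*·u⁻¹` is a projection
(`P² = P`, `P* = P`) von Neumann equivalent to `p`: `p·P = P`, `P·p = p`. -/
theorem stmt_7 {R : Type*} [Ring R] [StarRing R] (p : R) (hp : p * p = p)
    [Invertible (1 - (p - star p) ^ 2)] :
    (p * star p * ⅟(1 - (p - star p) ^ 2)) * (p * star p * ⅟(1 - (p - star p) ^ 2)) =
        p * star p * ⅟(1 - (p - star p) ^ 2) ∧
    star (p * star p * ⅟(1 - (p - star p) ^ 2)) = p * star p * ⅟(1 - (p - star p) ^ 2) ∧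
    p * (p * star p * ⅟(1 - (p - star p) ^ 2)) = p * star p * ⅟(1 - (p - star p) ^ 2) ∧
    (p * star p * ⅟(1 - (p - star p) ^ 2)) * p = p := by
  have hq : star p * star p = star p := by rw [← star_mul, hp]
  have hswap : 1 - (star p - p) ^ 2 = 1 - (p - star p) ^ 2 := by
    rw [show star p - p = -(p - star p) by abel, neg_sq]
  have hpu : p * (1 - (p - star p) ^ 2) = (1 - (p - star p) ^ 2) * p :=
    (stmt7_aux_left p (star p) hp hq).trans (stmt7_aux_right p (star p) hp hq).symm
  have hqu : star p * (1 - (p - star p) ^ 2) = (1 - (p - star p) ^ 2) * star p := by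
    have h1 := stmt7_aux_left (star p) p hq hp
    have h2 := stmt7_aux_right (star p) p hq hp
    rw [hswap] at h1 h2
    exact h1.trans h2.symm
  have hpv : p * ⅟(1 - (p - star p) ^ 2) = ⅟(1 - (p - star p) ^ 2) * p :=
    (Commute.invOf_right hpu).eq
  have hqv : star p * ⅟(1 - (p - star p) ^ 2) = ⅟(1 - (p - star p) ^ 2) * star p :=
    (Commute.invOf_right hqu).eq
  have hsu : star (1 - (p - star p) ^ 2) = 1 - (p - star p) ^ 2 := by
    simp only [star_sub, star_one, star_pow, star_star]
    exact hswap
  have hsv : star (⅟(1 - (p - star p) ^ 2)) = ⅟(1 - (p - star p) ^ 2) := by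
    have h1 : star (⅟(1 - (p - star p) ^ 2)) * (1 - (p - star p) ^ 2) = 1 := by
      have h2 := congrArg star (mul_invOf_self (1 - (p - star p) ^ 2))
      rw [star_mul, hsu, star_one] at h2
      exact h2
    exact (invOf_eq_left_inv h1).symm
  have key : (p * star p * ⅟(1 - (p - star p) ^ 2)) * p = p := by
    rw [mul_assoc (p * star p), ← hpv, ← mul_assoc, ← stmt7_aux_left p (star p) hp hq,
      mul_assoc, mul_invOf_self, mul_one]
  refine ⟨?_, ?_, ?_, key⟩
  · rw [← mul_assoc, ← mul_assoc, key]
  · rw [star_mul, star_mul, star_star, hsv, ← mul_assoc, ← hpv, mul_assoc, ← hqv,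
      ← mul_assoc]
  · rw [← mul_assoc, ← mul_assoc, hp]
end

section
/- Let A and B be rings with involution (a ↦ a* additive with (ab)* = b*a*, a** = a), and let M be an (A,B)-bimodule equipped with two pairings ⟨·,·⟩_A : M × M → A and ⟨·,·⟩_B : M × M → B, each additive in both variables, satisfying for all l, m, n ∈ M, a ∈ A, b ∈ B: ⟨m,n⟩_A* = ⟨n,m⟩_A, ⟨m,n⟩_B* = ⟨n,m⟩_B, ⟨a·m, n⟩_A = a·⟨m,n⟩_A, ⟨m, a·n⟩_A = ⟨m,n⟩_A·a*, ⟨m·b, n⟩_B = b*·⟨m,n⟩_B, ⟨m, n·b⟩_B = ⟨m,n⟩_B·b, and the compatibility ⟨l,m⟩_A·n = l·⟨m,n⟩_B. Then: (a) if m ∈ M satisfies m·⟨m,m⟩_B = m, then p := ⟨m,m⟩_A is a projection in A, i.e. p² = p and p* = p; (b) conversely, if in addition ⟨n,n⟩_A = 0 implies n = 0 for all n ∈ M, and if p := ⟨m,m⟩_A satisfies p² = p and p* = p, then m·⟨m,m⟩_B = m. -/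
open MulOpposite

/-- Lemma 1.6.1, Rieffel's projections: let `M` be an
`(A,B)`-bimodule over rings with involution, equipped with pairings
`⟨·,·⟩_A : M × M → A` and `⟨·,·⟩_B : M × M → B` satisfying Rieffel's identities
(1.8)–(1.11). Then (a) `m·⟨m,m⟩_B = m` implies `p := ⟨m,m⟩_A` is a projection; and
(b) if moreover `⟨n,n⟩_A = 0 → n = 0`, then conversely `p` a projection implies
`m·⟨m,m⟩_B = m`. -/
theorem stmt_8 {A B M : Type*} [Ring A] [StarRing A] [Ring B] [StarRing B]
    [AddCommGroup M] [Module A M] [Module Bᵐᵒᵖ M] [SMulCommClass A Bᵐᵒᵖ M]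
    (innA : M → M → A) (innB : M → M → B)
    (hA_addl : ∀ m m' n : M, innA (m + m') n = innA m n + innA m' n)
    (hA_addr : ∀ m n n' : M, innA m (n + n') = innA m n + innA m n')
    (hB_addl : ∀ m m' n : M, innB (m + m') n = innB m n + innB m' n)
    (hB_addr : ∀ m n n' : M, innB m (n + n') = innB m n + innB m n')
    (hA_star : ∀ m n : M, star (innA m n) = innA n m)
    (hB_star : ∀ m n : M, star (innB m n) = innB n m)
    (hA_smull : ∀ (a : A) (m n : M), innA (a • m) n = a * innA m n)
    (hA_smulr : ∀ (a : A) (m n : M), innA m (a • n) = innA m n * star a)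
    (hB_smull : ∀ (b : B) (m n : M), innB (op b • m) n = star b * innB m n)
    (hB_smulr : ∀ (b : B) (m n : M), innB m (op b • n) = innB m n * b)
    (hcompat : ∀ l m n : M, innA l m • n = op (innB m n) • l) :
    (∀ m : M, op (innB m m) • m = m →
      innA m m * innA m m = innA m m ∧ star (innA m m) = innA m m) ∧
    ((∀ n : M, innA n n = 0 → n = 0) →
      ∀ m : M, innA m m * innA m m = innA m m → star (innA m m) = innA m m →
        op (innB m m) • m = m) := by
  constructor
  · intro m hm
    refine ⟨?_, hA_star m m⟩
    calc innA m m * innA m m = innA (innA m m • m) m := (hA_smull _ _ _).symm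
      _ = innA (op (innB m m) • m) m := by rw [hcompat]
      _ = innA m m := by rw [hm]
  · intro hdef m hp2 hps
    set q : M := op (innB m m) • m with hq
    have hq' : innA m m • m = q := hcompat m m m
    have h1 : innA q m = innA m m := by
      rw [← hq', hA_smull, hp2]
    have h2 : innA m q = innA m m := by
      rw [← hA_star, h1, hps]
    have h3 : innA q q = innA m m := by
      nth_rewrite 1 [← hq']
      rw [hA_smull, h2, hp2]
    have hsubl : ∀ x y z : M, innA (x - y) z = innA x z - innA y z := by
      intro x y z
      have := hA_addl (x - y) y z
      rw [sub_add_cancel] at this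
      exact eq_sub_of_add_eq this.symm
    have hsubr : ∀ x y z : M, innA x (y - z) = innA x y - innA x z := by
      intro x y z
      have := hA_addr x (y - z) z
      rw [sub_add_cancel] at this
      exact eq_sub_of_add_eq this.symm
    have h0 : innA (q - m) (q - m) = 0 := by
      rw [hsubl, hsubr, hsubr, h1, h2, h3]; abel
    have := hdef _ h0
    have : q = m := by rwa [sub_eq_zero] at this
    simpa [hq] using this
end

section
/- Let k be a field and A, B unital associative k-algebras. A trace on a k-algebra R is a k-linear map R → k vanishing on all commutators ab − ba; for an idempotent matrix e over R and a trace t, write t(e) for t applied to the sum of the diagonal entries of e. Assume: (i) the space of traces on A is one-dimensional, spanned by a trace t_A with t_A(1) ≠ 0; (ii) t_B is a trace on B; (iii) M is an (A,B)-bimodule (with the two k-actions agreeing) which is finitely generated projective as a left A-module and finitely generated projective as a right B-module, say M ≅ p·B^l as right B-modules for some idempotent p ∈ M_l(B). Set c := t_B(p)·t_A(1)^{-1}. Then for every idempotent matrix q ∈ M_n(A) and every idempotent matrix r ∈ M_m(B) such that r·B^m is isomorphic to (q·A^n) ⊗_A M as right B-modules, one has t_B(r) = c·t_A(q). -/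
open MulOpposite

/-- The right `B`-module `p·Bˡ`: column vectors `v ∈ Bˡ` with `p·v = v`, as a module
over `Bᵐᵒᵖ`. -/
def idemRange {B : Type*} [Ring B] {l : ℕ} (p : Matrix (Fin l) (Fin l) B) :
    Submodule Bᵐᵒᵖ (Fin l → B) where
  carrier := {v | p.mulVec v = v}
  add_mem' := by
    intro a b ha hb
    simp only [Set.mem_setOf_eq] at *
    rw [Matrix.mulVec_add, ha, hb]
  zero_mem' := by
    simp only [Set.mem_setOf_eq, Matrix.mulVec_zero]
  smul_mem' := by
    intro c v hv
    simp only [Set.mem_setOf_eq] at *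
    have h : p.mulVec (c • v) = c • p.mulVec v := by
      funext i
      simp only [Matrix.mulVec, dotProduct, Pi.smul_apply, smul_eq_mul_unop,
        Finset.sum_mul, mul_assoc]
    rw [h, hv]

/-- The right `B`-module `q·Mⁿ` (concrete model of `(q·Aⁿ) ⊗_A M`): vectors
`w ∈ Mⁿ` fixed by the action of the idempotent matrix `q ∈ Mₙ(A)`, as a module over
`Bᵐᵒᵖ` via the right `B`-action on the `(A,B)`-bimodule `M`. -/
def matSmulRange {A M : Type*} [Ring A] [AddCommGroup M] [Module A M]
    {B : Type*} [Ring B] [Module Bᵐᵒᵖ M] [SMulCommClass A Bᵐᵒᵖ M]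
    {n : ℕ} (q : Matrix (Fin n) (Fin n) A) : Submodule Bᵐᵒᵖ (Fin n → M) where
  carrier := {w | (fun i => ∑ j, q i j • w j) = w}
  add_mem' := by
    intro a b ha hb
    simp only [Set.mem_setOf_eq] at *
    funext i
    calc (∑ j, q i j • (a + b) j) = (∑ j, q i j • a j) + ∑ j, q i j • b j := by
          simp [smul_add, Finset.sum_add_distrib]
      _ = (a + b) i := by
          rw [show (∑ j, q i j • a j) = a i from congrFun ha i,
            show (∑ j, q i j • b j) = b i from congrFun hb i]; rfl
  zero_mem' := by
    simp only [Set.mem_setOf_eq]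
    funext i
    simp
  smul_mem' := by
    intro c w hw
    simp only [Set.mem_setOf_eq] at *
    funext i
    calc (∑ j, q i j • (c • w) j) = c • ∑ j, q i j • w j := by
          rw [Finset.smul_sum]
          exact Finset.sum_congr rfl fun j _ => (smul_comm (q i j) c (w j)).symm ▸ rfl
      _ = (c • w) i := by rw [show (∑ j, q i j • w j) = w i from congrFun hw i]; rfl


/-!
The left action of `A` on `M ≅ p·Bˡ` is right `B`-linear, so in the coordinates given by the
columns of `p` it becomes a multiplicative, `k`-linear map `ρ : A → M_l(B)` with `ρ 1 = p`.
Then `a ↦ t_B(tr ρ(a))` is a trace on `A`, hence equals `c·t_A`, and evaluating at `a = 1`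
identifies `c`. Replacing every entry `q i j` by the block `ρ (q i j)` gives an idempotent
`Q ∈ M_{nl}(B)` with `Q·B^{nl} ≅ (q·Aⁿ) ⊗_A M ≅ r·Bᵐ`, and `t_B(tr Q) = t_B(tr ρ(tr q))`.
Finally, isomorphic idempotents `e`, `f` factor as `e = vu`, `f = uv`, so `t_B(tr r) = t_B(tr Q)`.
-/

namespace Matrix

section FixedVecs

variable {B : Type*} [Ring B] {ι κ : Type*} [Fintype ι] [Fintype κ]

def fixedVecs (p : Matrix ι ι B) : Submodule Bᵐᵒᵖ (ι → B) where
  carrier := {v | p *ᵥ v = v}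
  add_mem' {v w} (hv : p *ᵥ v = v) (hw : p *ᵥ w = w) :=
    show p *ᵥ (v + w) = v + w by rw [mulVec_add, hv, hw]
  zero_mem' := mulVec_zero p
  smul_mem' b v (hv : p *ᵥ v = v) := show p *ᵥ (b • v) = b • v by rw [mulVec_smul, hv]

theorem mem_fixedVecs {p : Matrix ι ι B} {v : ι → B} : v ∈ fixedVecs p ↔ p *ᵥ v = v := Iff.rfl

theorem idemRange_eq_fixedVecs {l : ℕ} (p : Matrix (Fin l) (Fin l) B) :
    idemRange p = fixedVecs p := rfl

namespace fixedVecs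

variable {e : Matrix ι ι B} {f : Matrix κ κ B}

def col (he : e * e = e) (j : ι) : fixedVecs e :=
  ⟨fun i => e i j, by
    ext i
    simpa [mulVec, dotProduct, mul_apply] using congrFun₂ he i j⟩

theorem sum_op_smul_col (he : e * e = e) (v : fixedVecs e) :
    ∑ j, op ((v : ι → B) j) • col he j = v := by
  ext i
  simpa [col, mulVec, dotProduct] using congrFun (mem_fixedVecs.1 v.2) i

def toMatrix (he : e * e = e) (φ : fixedVecs e →ₗ[Bᵐᵒᵖ] fixedVecs f) : Matrix κ ι B :=
  of fun i j => (φ (col he j) : κ → B) i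

theorem toMatrix_mulVec (he : e * e = e) (φ : fixedVecs e →ₗ[Bᵐᵒᵖ] fixedVecs f)
    (v : fixedVecs e) : toMatrix he φ *ᵥ (v : ι → B) = φ v := by
  conv_rhs => rw [← sum_op_smul_col he v]
  ext i
  simp [toMatrix, mulVec, dotProduct]

theorem toMatrix_comp {μ : Type*} [Fintype μ] {g : Matrix μ μ B} (he : e * e = e)
    (hf : f * f = f) (ψ : fixedVecs f →ₗ[Bᵐᵒᵖ] fixedVecs g)
    (φ : fixedVecs e →ₗ[Bᵐᵒᵖ] fixedVecs f) :
    toMatrix he (ψ ∘ₗ φ) = toMatrix hf ψ * toMatrix he φ := by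
  ext i j
  simpa [toMatrix, mul_apply, mulVec, dotProduct] using
    (congrFun (toMatrix_mulVec hf ψ (φ (col he j))) i).symm

theorem toMatrix_id (he : e * e = e) : toMatrix he LinearMap.id = e := rfl

theorem mul_toMatrix (he : e * e = e) (φ : fixedVecs e →ₗ[Bᵐᵒᵖ] fixedVecs f) :
    f * toMatrix he φ = toMatrix he φ := by
  ext i j
  simpa [toMatrix, mul_apply, mulVec, dotProduct] using
    congrFun (mem_fixedVecs.1 (φ (col he j)).2) i

end fixedVecs

end FixedVecs

section LeftAction

open fixedVecs

variable (k : Type*) [Field k] {B : Type*} [Ring B] [Algebra k B] {ι : Type*} [Fintype ι]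
  {e : Matrix ι ι B}

def fixedVecs.toMatrixₙₐ (he : e * e = e) :
    Module.End Bᵐᵒᵖ (fixedVecs e) →ₙₐ[k] Matrix ι ι B where
  toFun := toMatrix he
  map_smul' _ _ := rfl
  map_zero' := rfl
  map_add' _ _ := rfl
  map_mul' := toMatrix_comp he he

variable {A M : Type*} [Ring A] [Algebra k A] [AddCommGroup M] [Module k M] [Module A M]
  [Module Bᵐᵒᵖ M] [SMulCommClass A Bᵐᵒᵖ M] [IsScalarTower k A M] [IsScalarTower k Bᵐᵒᵖ M]

def lsmulMatrix (he : e * e = e) (E : M ≃ₗ[Bᵐᵒᵖ] fixedVecs e) : A →ₙₐ[k] Matrix ι ι B :=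
  (toMatrixₙₐ k he).comp
    ((E.conjAlgEquiv k).toAlgHom.comp (Algebra.lsmul k Bᵐᵒᵖ M)).toNonUnitalAlgHom

variable {k} (he : e * e = e) (E : M ≃ₗ[Bᵐᵒᵖ] fixedVecs e)

theorem lsmulMatrix_apply (a : A) :
    lsmulMatrix k he E a = toMatrix he (E.conjAlgEquiv k (Algebra.lsmul k Bᵐᵒᵖ M a)) := rfl

theorem lsmulMatrix_mulVec (a : A) (x : M) :
    lsmulMatrix k he E a *ᵥ (E x : ι → B) = E (a • x) := by
  rw [lsmulMatrix_apply, toMatrix_mulVec]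
  simp

theorem lsmulMatrix_one : lsmulMatrix k he E (1 : A) = e := by
  rw [lsmulMatrix_apply, map_one, map_one]
  rfl

theorem lsmulMatrix_mulVec_mem (a : A) (v : ι → B) :
    lsmulMatrix k he E a *ᵥ v ∈ fixedVecs e := by
  rw [mem_fixedVecs, mulVec_mulVec]
  exact congrArg (· *ᵥ v) (mul_toMatrix he _)

end LeftAction

section Trace

open fixedVecs

variable {B : Type*} [Ring B] {ι κ : Type*} [Fintype ι] [Fintype κ]
  {N F : Type*} [AddCommMonoid N] [FunLike F B N] [AddMonoidHomClass F B N]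

theorem map_trace_mul_comm (t : F) (ht : ∀ a b : B, t (a * b) = t (b * a))
    (X : Matrix ι κ B) (Y : Matrix κ ι B) : t (X * Y).trace = t (Y * X).trace := by
  simp only [trace, diag, mul_apply, map_sum]
  rw [Finset.sum_comm]
  simp only [ht]

theorem map_trace_eq_of_linearEquiv (t : F) (ht : ∀ a b : B, t (a * b) = t (b * a))
    {e : Matrix ι ι B} {f : Matrix κ κ B} (he : e * e = e) (hf : f * f = f)
    (φ : fixedVecs e ≃ₗ[Bᵐᵒᵖ] fixedVecs f) : t e.trace = t f.trace := by
  set u := toMatrix he φ.toLinearMap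
  set v := toMatrix hf φ.symm.toLinearMap
  have hvu : e = v * u := by
    rw [← toMatrix_comp, φ.symm_comp, toMatrix_id]
  have huv : f = u * v := by
    rw [← toMatrix_comp, φ.comp_symm, toMatrix_id]
  rw [hvu, huv, map_trace_mul_comm t ht]

end Trace

section Blocks

variable {B : Type*} [Ring B] {ι I : Type*} [Fintype ι] [Fintype I] {A : Type*} [Ring A]
  {F : Type*} [FunLike F A (Matrix ι ι B)]

theorem trace_comp_map [AddMonoidHomClass F A (Matrix ι ι B)] (ρ : F) (q : Matrix I I A) :
    (comp _ _ _ _ B (q.map ρ)).trace = (ρ q.trace).trace := by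
  rw [show q.trace = ∑ i, q i i from rfl, map_sum, trace_sum]
  simp [trace, Fintype.sum_prod_type]

theorem comp_map_mul_self [NonUnitalRingHomClass F A (Matrix ι ι B)] (ρ : F)
    {q : Matrix I I A} (hq : q * q = q) :
    comp _ _ _ _ B (q.map ρ) * comp _ _ _ _ B (q.map ρ) = comp _ _ _ _ B (q.map ρ) := by
  rw [← compRingEquiv_apply, ← map_mul, ← Matrix.map_mul, hq]

end Blocks

section BlockEmbedding

variable {B : Type*} [Ring B] {ι : Type*} {M : Type*} [AddCommGroup M] [Module Bᵐᵒᵖ M]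

def blockEmbedding (n : ℕ) (E : M →ₗ[Bᵐᵒᵖ] (ι → B)) :
    (Fin n → M) →ₗ[Bᵐᵒᵖ] (Fin n × ι → B) :=
  (LinearEquiv.curry Bᵐᵒᵖ B (Fin n) ι).symm.toLinearMap ∘ₗ E.compLeft (Fin n)

@[simp]
theorem blockEmbedding_apply (n : ℕ) (E : M →ₗ[Bᵐᵒᵖ] (ι → B)) (w : Fin n → M)
    (x : Fin n × ι) : blockEmbedding n E w x = E (w x.1) x.2 := rfl

theorem blockEmbedding_injective (n : ℕ) {E : M →ₗ[Bᵐᵒᵖ] (ι → B)}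
    (hE : Function.Injective E) : Function.Injective (blockEmbedding n E) := fun _ _ h =>
  funext fun i => hE (funext fun s => congrFun h (i, s))

variable [Fintype ι] {A : Type*} {n : ℕ} (q : Matrix (Fin n) (Fin n) A)
  (ρ : A → Matrix ι ι B) {E : M →ₗ[Bᵐᵒᵖ] (ι → B)}

theorem fixedVecs_comp_map_le_range (hρ : ∀ a v, ρ a *ᵥ v ∈ LinearMap.range E) :
    fixedVecs (comp _ _ _ _ B (q.map ρ)) ≤ LinearMap.range (blockEmbedding n E) := by
  intro v hv
  have hslice : ∀ i, (fun s => v (i, s)) ∈ LinearMap.range E := by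
    intro i
    have hexpand : (fun s => v (i, s)) = ∑ j, ρ (q i j) *ᵥ fun t => v (j, t) := by
      conv_lhs => rw [← mem_fixedVecs.1 hv]
      ext s
      simp [mulVec, dotProduct, Fintype.sum_prod_type]
    rw [hexpand]
    exact Submodule.sum_mem _ fun j _ => hρ _ _
  choose w hw using hslice
  exact ⟨w, funext fun x => congrFun (hw x.1) x.2⟩

variable [Ring A] [Module A M]

theorem comp_map_mulVec_blockEmbedding (hρE : ∀ a x, ρ a *ᵥ E x = E (a • x))
    (w : Fin n → M) :
    comp _ _ _ _ B (q.map ρ) *ᵥ blockEmbedding n E w =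
      blockEmbedding n E (fun i => ∑ j, q i j • w j) := by
  ext ⟨i, s⟩
  have hblock : ∀ j, ∑ t, ρ (q i j) s t * E (w j) t = E (q i j • w j) s := fun j =>
    congrFun (hρE (q i j) (w j)) s
  simp [mulVec, dotProduct, Fintype.sum_prod_type, hblock, map_sum]

variable [SMulCommClass A Bᵐᵒᵖ M]

theorem comap_blockEmbedding_fixedVecs (hE : Function.Injective E)
    (hρE : ∀ a x, ρ a *ᵥ E x = E (a • x)) :
    (fixedVecs (comp _ _ _ _ B (q.map ρ))).comap (blockEmbedding n E) =
      matSmulRange (B := B) (M := M) q := by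
  ext w
  rw [Submodule.mem_comap, mem_fixedVecs, comp_map_mulVec_blockEmbedding q ρ hρE,
    (blockEmbedding_injective n hE).eq_iff]
  rfl

noncomputable def matSmulRangeEquiv (hE : Function.Injective E)
    (hρE : ∀ a x, ρ a *ᵥ E x = E (a • x)) (hρ : ∀ a v, ρ a *ᵥ v ∈ LinearMap.range E) :
    matSmulRange (B := B) (M := M) q ≃ₗ[Bᵐᵒᵖ] fixedVecs (comp _ _ _ _ B (q.map ρ)) :=
  (Submodule.equivMapOfInjective _ (blockEmbedding_injective n hE) _).trans <|
    LinearEquiv.ofEq _ _ <| by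
      rw [← comap_blockEmbedding_fixedVecs q ρ hE hρE,
        Submodule.map_comap_eq_of_le (fixedVecs_comp_map_le_range q ρ hρ)]

end BlockEmbedding

end Matrix

open Matrix

theorem stmt_9_general {k : Type*} [Field k] {A B M : Type*}
    [Ring A] [Algebra k A] [Ring B] [Algebra k B]
    [AddCommGroup M] [Module k M] [Module A M] [Module Bᵐᵒᵖ M]
    [SMulCommClass A Bᵐᵒᵖ M] [IsScalarTower k A M] [IsScalarTower k Bᵐᵒᵖ M]
    (tA : A →ₗ[k] k) (htA1 : tA 1 ≠ 0)
    (huniq : ∀ t : A →ₗ[k] k, (∀ a b : A, t (a * b) = t (b * a)) → ∃ c : k, t = c • tA)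
    (tB : B →ₗ[k] k) (htB : ∀ a b : B, tB (a * b) = tB (b * a))
    (l : ℕ) (p : Matrix (Fin l) (Fin l) B) (hp : p * p = p)
    (hMp : Nonempty (M ≃ₗ[Bᵐᵒᵖ] idemRange p)) :
    ∀ (n m : ℕ) (q : Matrix (Fin n) (Fin n) A) (r : Matrix (Fin m) (Fin m) B),
      q * q = q → r * r = r →
      Nonempty (idemRange r ≃ₗ[Bᵐᵒᵖ] matSmulRange (B := B) (M := M) q) →
      tB r.trace = tB p.trace * (tA 1)⁻¹ * tA q.trace := by
  rw [idemRange_eq_fixedVecs] at hMp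
  obtain ⟨e⟩ := hMp
  rintro n m q r hq hr ⟨ψ⟩
  set ρ := lsmulMatrix k (A := A) hp e
  set τ : A →ₗ[k] k := tB ∘ₗ traceLinearMap _ k B ∘ₗ LinearMapClass.linearMap ρ
  obtain ⟨c, hc⟩ := huniq τ fun a b => by
    show tB (ρ (a * b)).trace = tB (ρ (b * a)).trace
    rw [map_mul, map_mul, map_trace_mul_comm tB htB]
  have hc1 : tB p.trace = c * tA 1 := by
    rw [← lsmulMatrix_one (k := k) (A := A) hp e]
    exact congrArg (· 1) hc
  let E := (fixedVecs p).subtype ∘ₗ e.toLinearMap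
  have hE : Function.Injective E := Subtype.val_injective.comp e.injective
  have hρE : ∀ a x, ρ a *ᵥ E x = E (a • x) := lsmulMatrix_mulVec hp e
  have hρ : ∀ a v, ρ a *ᵥ v ∈ LinearMap.range E := fun a v =>
    ⟨e.symm ⟨ρ a *ᵥ v, lsmulMatrix_mulVec_mem (k := k) hp e a v⟩, by simp [E]⟩
  calc tB r.trace = tB (comp _ _ _ _ B (q.map ρ)).trace :=
        map_trace_eq_of_linearEquiv tB htB hr (comp_map_mul_self ρ hq)
          (ψ.trans (matSmulRangeEquiv q ρ hE hρE hρ))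
    _ = τ q.trace := by rw [trace_comp_map]; rfl
    _ = c * tA q.trace := by rw [hc]; rfl
    _ = tB p.trace * (tA 1)⁻¹ * tA q.trace := by rw [hc1]; field_simp

/-- Lemma 1.4.2: if `A` has a one-dimensional space of traces
spanned by `t_A` with `t_A 1 ≠ 0`, `t_B` is a trace on `B`, and `M` is an
`(A,B)`-bimodule, finitely generated projective both as a left `A`-module and a
right `B`-module, with `M ≅ p·Bˡ` for an idempotent `p`, then with
`c := t_B(p)·t_A(1)⁻¹`, for any idempotents `q ∈ Mₙ(A)`, `r ∈ Mₘ(B)` with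
`r·Bᵐ ≅ (q·Aⁿ) ⊗_A M` as right `B`-modules one has `t_B(r) = c·t_A(q)`. -/
theorem stmt_9 {k : Type*} [Field k] {A B M : Type*}
    [Ring A] [Algebra k A] [Ring B] [Algebra k B]
    [AddCommGroup M] [Module k M] [Module A M] [Module Bᵐᵒᵖ M]
    [SMulCommClass A Bᵐᵒᵖ M] [IsScalarTower k A M] [IsScalarTower k Bᵐᵒᵖ M]
    (tA : A →ₗ[k] k) (htA : ∀ a b : A, tA (a * b) = tA (b * a)) (htA1 : tA 1 ≠ 0)
    (huniq : ∀ t : A →ₗ[k] k, (∀ a b : A, t (a * b) = t (b * a)) → ∃ c : k, t = c • tA)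
    (tB : B →ₗ[k] k) (htB : ∀ a b : B, tB (a * b) = tB (b * a))
    [Module.Finite A M] [Module.Projective A M]
    [Module.Finite Bᵐᵒᵖ M] [Module.Projective Bᵐᵒᵖ M]
    (l : ℕ) (p : Matrix (Fin l) (Fin l) B) (hp : p * p = p)
    (hMp : Nonempty (M ≃ₗ[Bᵐᵒᵖ] idemRange p)) :
    ∀ (n m : ℕ) (q : Matrix (Fin n) (Fin n) A) (r : Matrix (Fin m) (Fin m) B),
      q * q = q → r * r = r →
      Nonempty (idemRange r ≃ₗ[Bᵐᵒᵖ] matSmulRange (B := B) (M := M) q) →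
      tB r.trace = tB p.trace * (tA 1)⁻¹ * tA q.trace :=
  stmt_9_general tA htA1 huniq tB htB l p hp hMp
end

section
/- Let v ∈ ℂ with Im v > 0 and let m, m' be nonzero real numbers. Then e^{2πi·v·|m·m'|} = √(−iv)·|m'|·∫_{−∞}^{∞} e^{−t/2}·e^{πi·v·(m²e^t + m'²e^{−t})} dt = √(−iv)·|m|·∫_{−∞}^{∞} e^{t/2}·e^{πi·v·(m²e^t + m'²e^{−t})} dt, where both integrals converge absolutely and √(−iv) denotes the principal square root (which is positive when v lies on the positive imaginary axis; note Re(−iv) > 0 when Im v > 0). -/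
/-!
Put `p = |m|`, `q = |m'|` and `b = -πiv`, so `Re b > 0`. The substitution
`y = p e^{t/2} - q e^{-t/2}` is an increasing bijection of `ℝ` with
`y² = m² eᵗ + m'² e⁻ᵗ - 2|mm'|` and `dy = ½ (p e^{t/2} + q e^{-t/2}) dt`,
so it turns the Gaussian integral `∫ e^{-by²} dy = (π / b)^{1/2} = (-iv)^{-1/2}`
into `½ e^{2b|mm'|} (p I₊ + q I₋)`, where `I± = ∫ e^{±t/2} e^{-b(m² eᵗ + m'² e⁻ᵗ)} dt`.
The reflection `t ↦ 2 log (q / p) - t` fixes `m² eᵗ + m'² e⁻ᵗ` and turns `e^{t/2}`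
into `(q / p) e^{-t/2}`, whence `p I₊ = q I₋`.
-/

open Real MeasureTheory Set Filter

section ChangeOfVariables

variable {E : Type*} [NormedAddCommGroup E] [NormedSpace ℝ E] {φ φ' : ℝ → ℝ}

theorem integrable_deriv_smul_comp_iff (hφ : ∀ t, HasDerivAt φ (φ' t) t) (hmono : Monotone φ)
    (hsurj : Function.Surjective φ) (g : ℝ → E) :
    Integrable (fun t => φ' t • g (φ t)) ↔ Integrable g := by
  have := integrableOn_image_iff_integrableOn_deriv_smul_of_monotoneOn MeasurableSet.univ
    (fun t _ => (hφ t).hasDerivWithinAt) (hmono.monotoneOn univ) g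
  rwa [image_univ_of_surjective hsurj, integrableOn_univ, integrableOn_univ, Iff.comm] at this

theorem integral_deriv_smul_comp (hφ : ∀ t, HasDerivAt φ (φ' t) t) (hmono : Monotone φ)
    (hsurj : Function.Surjective φ) (g : ℝ → E) :
    ∫ t, φ' t • g (φ t) = ∫ y, g y := by
  have := integral_image_eq_integral_deriv_smul_of_monotoneOn MeasurableSet.univ
    (fun t _ => (hφ t).hasDerivWithinAt) (hmono.monotoneOn univ) g
  rwa [image_univ_of_surjective hsurj, Measure.restrict_univ, eq_comm] at this

end ChangeOfVariables

theorem MeasureTheory.Integrable.smul_of_abs_le {X E : Type*} [MeasurableSpace X]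
    {μ : Measure X} [NormedAddCommGroup E] [NormedSpace ℝ E] {α β : X → ℝ} {f : X → E}
    (h : Integrable (fun x => β x • f x) μ) (hα : AEStronglyMeasurable (fun x => α x • f x) μ)
    (hle : ∀ x, |α x| ≤ β x) : Integrable (fun x => α x • f x) μ :=
  h.mono hα <| ae_of_all _ fun x => by
    simp only [norm_smul, Real.norm_eq_abs]
    exact mul_le_mul_of_nonneg_right ((hle x).trans (le_abs_self _)) (norm_nonneg _)

section ExpHalfSub

variable {p q : ℝ}

theorem hasDerivAt_mul_exp_half_sub (p q t : ℝ) :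
    HasDerivAt (fun t => p * exp (t / 2) - q * exp (-t / 2))
      ((p * exp (t / 2) + q * exp (-t / 2)) / 2) t := by
  have h₁ := ((hasDerivAt_id' t).div_const 2).exp.const_mul p
  have h₂ := ((hasDerivAt_neg' t).div_const 2).exp.const_mul q
  exact (h₁.sub h₂).congr_deriv (by ring)

theorem mul_exp_half_sub_sq (p q t : ℝ) :
    (p * exp (t / 2) - q * exp (-t / 2)) ^ 2 = p ^ 2 * exp t + q ^ 2 * exp (-t) - 2 * (p * q) := by
  have h₁ : exp (t / 2) ^ 2 = exp t := by rw [← exp_nat_mul]; ring_nf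
  have h₂ : exp (-t / 2) ^ 2 = exp (-t) := by rw [← exp_nat_mul]; ring_nf
  have h₃ : exp (t / 2) * exp (-t / 2) = 1 := by rw [← exp_add]; ring_nf; exact exp_zero
  linear_combination p ^ 2 * h₁ + q ^ 2 * h₂ - 2 * p * q * h₃

theorem strictMono_mul_exp_half_sub (hp : 0 < p) (hq : 0 < q) :
    StrictMono (fun t => p * exp (t / 2) - q * exp (-t / 2)) :=
  strictMono_of_hasDerivAt_pos (hasDerivAt_mul_exp_half_sub p q) fun t => by positivity

theorem surjective_mul_exp_half_sub (hp : 0 < p) (hq : 0 < q) :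
    Function.Surjective (fun t => p * exp (t / 2) - q * exp (-t / 2)) := by
  have hpos : Tendsto (fun t : ℝ => t / 2) atTop atTop := tendsto_id.atTop_div_const two_pos
  have hneg : Tendsto (fun t : ℝ => -t / 2) atBot atTop := by
    simpa only [neg_div] using tendsto_neg_atBot_atTop.atTop_div_const (two_pos : (0 : ℝ) < 2)
  have hpos' : Tendsto (fun t : ℝ => t / 2) atBot atBot := tendsto_id.atBot_div_const two_pos
  have hneg' : Tendsto (fun t : ℝ => -t / 2) atTop atBot := by
    simpa only [neg_div] using tendsto_neg_atTop_atBot.atBot_div_const (two_pos : (0 : ℝ) < 2)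
  refine Continuous.surjective (by fun_prop) ?_ ?_
  · have h := ((tendsto_exp_atTop.comp hpos).const_mul_atTop hp).atTop_add
      ((tendsto_exp_atBot.comp hneg').const_mul q).neg
    simpa only [Function.comp_apply, mul_zero, neg_zero, ← sub_eq_add_neg] using h
  · have h := ((tendsto_exp_atBot.comp hpos').const_mul p).add_atBot
      (tendsto_neg_atTop_atBot.comp ((tendsto_exp_atTop.comp hneg).const_mul_atTop hq))
    simpa only [Function.comp_apply, mul_zero, zero_add, ← sub_eq_add_neg] using h

end ExpHalfSub

theorem smul_integral_exp_half_smul_comp {E : Type*} [NormedAddCommGroup E] [NormedSpace ℝ E]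
    {p q : ℝ} (hp : 0 < p) (hq : 0 < q) (G : ℝ → E) :
    p • ∫ t, exp (t / 2) • G (p ^ 2 * exp t + q ^ 2 * exp (-t)) =
      q • ∫ t, exp (-t / 2) • G (p ^ 2 * exp t + q ^ 2 * exp (-t)) := by
  set d := 2 * log (q / p)
  have hd : exp (d / 2) = q / p := by
    rw [show d / 2 = log (q / p) by ring, exp_log (div_pos hq hp)]
  have hreflect (t : ℝ) :
      exp ((d - t) / 2) • G (p ^ 2 * exp (d - t) + q ^ 2 * exp (-(d - t))) =
        (q / p) • (exp (-t / 2) • G (p ^ 2 * exp t + q ^ 2 * exp (-t))) := by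
    have e₁ : exp ((d - t) / 2) = q / p * exp (-t / 2) := by
      rw [← hd, ← exp_add]; ring_nf
    have e₂ : exp (d - t) = (q / p) ^ 2 * exp (-t) := by
      rw [← hd, sq, ← exp_add, ← exp_add]; ring_nf
    have e₃ : exp (-(d - t)) = (p / q) ^ 2 * exp t := by
      rw [← inv_div, ← hd, ← exp_neg, sq, ← exp_add, ← exp_add]; ring_nf
    rw [e₁, e₂, e₃, smul_smul]
    congr 2
    field_simp
    ring
  calc p • ∫ t, exp (t / 2) • G (p ^ 2 * exp t + q ^ 2 * exp (-t))
      = p • ∫ t, exp ((d - t) / 2) • G (p ^ 2 * exp (d - t) + q ^ 2 * exp (-(d - t))) := by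
        congr 1
        exact (integral_sub_left_eq_self (fun t => exp (t / 2) •
          G (p ^ 2 * exp t + q ^ 2 * exp (-t))) volume d).symm
    _ = p • (q / p) • ∫ t, exp (-t / 2) • G (p ^ 2 * exp t + q ^ 2 * exp (-t)) := by
        simp_rw [hreflect, integral_smul]
    _ = q • ∫ t, exp (-t / 2) • G (p ^ 2 * exp t + q ^ 2 * exp (-t)) := by
        rw [smul_smul, mul_div_cancel₀ _ hp.ne']

section Gaussian

variable {b : ℂ} {p q : ℝ}

theorem cexp_neg_mul_mul_exp_half_sub_sq (b : ℂ) (p q t : ℝ) :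
    Complex.exp (-b * ((p * exp (t / 2) - q * exp (-t / 2) : ℝ) : ℂ) ^ 2) =
      Complex.exp (2 * b * ((p * q : ℝ) : ℂ)) *
        Complex.exp (-b * ((p ^ 2 * exp t + q ^ 2 * exp (-t) : ℝ) : ℂ)) := by
  rw [← Complex.exp_add, ← Complex.ofReal_pow, mul_exp_half_sub_sq]
  push_cast
  ring_nf

theorem integrable_deriv_smul_cexp_neg_mul (hb : 0 < b.re) (hp : 0 < p) (hq : 0 < q) :
    Integrable (fun t : ℝ => ((p * exp (t / 2) + q * exp (-t / 2)) / 2) •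
      Complex.exp (-b * ((p ^ 2 * exp t + q ^ 2 * exp (-t) : ℝ) : ℂ))) := by
  have h := (integrable_deriv_smul_comp_iff (hasDerivAt_mul_exp_half_sub p q)
    (strictMono_mul_exp_half_sub hp hq).monotone (surjective_mul_exp_half_sub hp hq) _).mpr
    (integrable_cexp_neg_mul_sq hb)
  simp only [cexp_neg_mul_mul_exp_half_sub_sq, ← mul_smul_comm] at h
  exact (integrable_const_mul_iff (Complex.exp_ne_zero _).isUnit _).mp h

theorem integral_deriv_smul_cexp_neg_mul (hb : 0 < b.re) (hp : 0 < p) (hq : 0 < q) :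
    Complex.exp (2 * b * ((p * q : ℝ) : ℂ)) *
      ∫ t : ℝ, ((p * exp (t / 2) + q * exp (-t / 2)) / 2) •
        Complex.exp (-b * ((p ^ 2 * exp t + q ^ 2 * exp (-t) : ℝ) : ℂ)) =
      (π / b) ^ (1 / 2 : ℂ) := by
  have h := integral_deriv_smul_comp (hasDerivAt_mul_exp_half_sub p q)
    (strictMono_mul_exp_half_sub hp hq).monotone (surjective_mul_exp_half_sub hp hq)
    (fun y : ℝ => Complex.exp (-b * (y : ℂ) ^ 2))
  simp only [cexp_neg_mul_mul_exp_half_sub_sq, ← mul_smul_comm, integral_const_mul] at h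
  rw [h, integral_gaussian_complex hb]

theorem integrable_exp_half_mul_cexp_neg_mul (hb : 0 < b.re) (hp : 0 < p) (hq : 0 < q) :
    Integrable (fun t : ℝ => (exp (t / 2) : ℂ) *
      Complex.exp (-b * ((p ^ 2 * exp t + q ^ 2 * exp (-t) : ℝ) : ℂ))) := by
  simp only [← Complex.real_smul]
  have h := (integrable_deriv_smul_cexp_neg_mul hb hp hq).fun_smul (2 / p)
  simp only [smul_smul] at h
  refine h.smul_of_abs_le (by fun_prop) fun t => ?_
  rw [abs_of_pos (exp_pos _)]
  field_simp
  linarith [mul_pos hp (exp_pos (t / 2)), mul_pos hq (exp_pos (-(t / 2)))]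

theorem integrable_exp_neg_half_mul_cexp_neg_mul (hb : 0 < b.re) (hp : 0 < p) (hq : 0 < q) :
    Integrable (fun t : ℝ => (exp (-t / 2) : ℂ) *
      Complex.exp (-b * ((p ^ 2 * exp t + q ^ 2 * exp (-t) : ℝ) : ℂ))) := by
  simp only [← Complex.real_smul]
  have h := (integrable_deriv_smul_cexp_neg_mul hb hp hq).fun_smul (2 / q)
  simp only [smul_smul] at h
  refine h.smul_of_abs_le (by fun_prop) fun t => ?_
  rw [abs_of_pos (exp_pos _)]
  field_simp
  linarith [mul_pos hp (exp_pos (t / 2)), mul_pos hq (exp_pos (-(t / 2)))]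

theorem mul_integral_exp_half_mul_cexp_neg_mul (hb : 0 < b.re) (hp : 0 < p) (hq : 0 < q) :
    (p : ℂ) * ∫ t : ℝ, (exp (t / 2) : ℂ) *
      Complex.exp (-b * ((p ^ 2 * exp t + q ^ 2 * exp (-t) : ℝ) : ℂ)) =
      (π / b) ^ (1 / 2 : ℂ) * Complex.exp (-2 * b * ((p * q : ℝ) : ℂ)) := by
  set A := ∫ t : ℝ, (exp (t / 2) : ℂ) *
    Complex.exp (-b * ((p ^ 2 * exp t + q ^ 2 * exp (-t) : ℝ) : ℂ))
  set B := ∫ t : ℝ, (exp (-t / 2) : ℂ) *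
    Complex.exp (-b * ((p ^ 2 * exp t + q ^ 2 * exp (-t) : ℝ) : ℂ))
  have hreflect : (p : ℂ) * A = q * B := by
    simpa only [Complex.real_smul] using
      smul_integral_exp_half_smul_comp hp hq (fun x => Complex.exp (-b * x))
  have hsplit : ∫ t : ℝ, ((p * exp (t / 2) + q * exp (-t / 2)) / 2) •
      Complex.exp (-b * ((p ^ 2 * exp t + q ^ 2 * exp (-t) : ℝ) : ℂ)) =
        (p * A + q * B) / 2 := by
    have hpt (t : ℝ) : ((p * exp (t / 2) + q * exp (-t / 2)) / 2) •
        Complex.exp (-b * ((p ^ 2 * exp t + q ^ 2 * exp (-t) : ℝ) : ℂ)) =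
        ((p : ℂ) * ((exp (t / 2) : ℂ) *
            Complex.exp (-b * ((p ^ 2 * exp t + q ^ 2 * exp (-t) : ℝ) : ℂ))) +
          (q : ℂ) * ((exp (-t / 2) : ℂ) *
            Complex.exp (-b * ((p ^ 2 * exp t + q ^ 2 * exp (-t) : ℝ) : ℂ)))) / 2 := by
      rw [Complex.real_smul]; push_cast; ring
    simp_rw [hpt]
    rw [integral_div, integral_add ((integrable_exp_half_mul_cexp_neg_mul hb hp hq).const_mul _)
      ((integrable_exp_neg_half_mul_cexp_neg_mul hb hp hq).const_mul _), integral_const_mul,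
      integral_const_mul]
  have hexp : Complex.exp (-2 * b * ((p * q : ℝ) : ℂ)) *
      Complex.exp (2 * b * ((p * q : ℝ) : ℂ)) = 1 := by
    rw [← Complex.exp_add, neg_mul, neg_mul, neg_add_cancel, Complex.exp_zero]
  have h := integral_deriv_smul_cexp_neg_mul hb hp hq
  rw [hsplit, ← hreflect] at h
  rw [← h]
  linear_combination -(p * A) * hexp

theorem mul_integral_exp_neg_half_mul_cexp_neg_mul (hb : 0 < b.re) (hp : 0 < p) (hq : 0 < q) :
    (q : ℂ) * ∫ t : ℝ, (exp (-t / 2) : ℂ) *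
      Complex.exp (-b * ((p ^ 2 * exp t + q ^ 2 * exp (-t) : ℝ) : ℂ)) =
      (π / b) ^ (1 / 2 : ℂ) * Complex.exp (-2 * b * ((p * q : ℝ) : ℂ)) := by
  rw [← mul_integral_exp_half_mul_cexp_neg_mul hb hp hq]
  simpa only [Complex.real_smul] using
    (smul_integral_exp_half_smul_comp hp hq (fun x => Complex.exp (-b * x))).symm

end Gaussian

theorem Complex.cpow_mul_inv_cpow_of_re_pos {z : ℂ} (hz : 0 < z.re) (s : ℂ) :
    z ^ s * z⁻¹ ^ s = 1 := by
  have harg : z.arg ≠ π := fun h => by linarith [(Complex.arg_eq_pi_iff.mp h).1]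
  have hz0 : z ≠ 0 := fun h => by simp [h] at hz
  rw [Complex.inv_cpow _ _ harg, mul_inv_cancel₀ (Complex.cpow_ne_zero_iff.mpr (Or.inl hz0))]

/-- integral identity (2.9): for `Im v > 0` and nonzero reals
`m, m'`, `e^{2πiv|mm'|} = √(−iv)·|m'|·∫ e^{−t/2} e^{πiv(m²eᵗ + m'²e⁻ᵗ)} dt
= √(−iv)·|m|·∫ e^{t/2} e^{πiv(m²eᵗ + m'²e⁻ᵗ)} dt`, both integrals converging
absolutely, with the principal branch of the square root. -/
theorem stmt_12 (v : ℂ) (hv : 0 < v.im) (m m' : ℝ) (hm : m ≠ 0) (hm' : m' ≠ 0) :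
    Integrable (fun t : ℝ => (Real.exp (-t / 2) : ℂ) *
      Complex.exp ((π : ℂ) * Complex.I * v *
        ((m ^ 2 * Real.exp t + m' ^ 2 * Real.exp (-t) : ℝ) : ℂ))) ∧
    Integrable (fun t : ℝ => (Real.exp (t / 2) : ℂ) *
      Complex.exp ((π : ℂ) * Complex.I * v *
        ((m ^ 2 * Real.exp t + m' ^ 2 * Real.exp (-t) : ℝ) : ℂ))) ∧
    Complex.exp (2 * (π : ℂ) * Complex.I * v * ((|m * m'| : ℝ) : ℂ)) =
      (-Complex.I * v) ^ ((1 : ℂ) / 2) * ((|m'| : ℝ) : ℂ) *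
        ∫ t : ℝ, (Real.exp (-t / 2) : ℂ) *
          Complex.exp ((π : ℂ) * Complex.I * v *
            ((m ^ 2 * Real.exp t + m' ^ 2 * Real.exp (-t) : ℝ) : ℂ)) ∧
    Complex.exp (2 * (π : ℂ) * Complex.I * v * ((|m * m'| : ℝ) : ℂ)) =
      (-Complex.I * v) ^ ((1 : ℂ) / 2) * ((|m| : ℝ) : ℂ) *
        ∫ t : ℝ, (Real.exp (t / 2) : ℂ) *
          Complex.exp ((π : ℂ) * Complex.I * v *
            ((m ^ 2 * Real.exp t + m' ^ 2 * Real.exp (-t) : ℝ) : ℂ)) := by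
  set b : ℂ := -(π * Complex.I * v) with hb_def
  have hb : 0 < b.re := by simpa [hb_def] using mul_pos pi_pos hv
  have hp : 0 < |m| := abs_pos.mpr hm
  have hq : 0 < |m'| := abs_pos.mpr hm'
  have hroot : (-Complex.I * v) ^ ((1 : ℂ) / 2) * (π / b) ^ (1 / 2 : ℂ) = 1 := by
    rw [show (π : ℂ) / b = (-Complex.I * v)⁻¹ by
        rw [hb_def]; field_simp [Complex.ofReal_ne_zero.mpr pi_ne_zero],
      Complex.cpow_mul_inv_cpow_of_re_pos (by simpa using hv)]
  have hexp : Complex.exp (2 * (π : ℂ) * Complex.I * v * ((|m * m'| : ℝ) : ℂ)) =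
      Complex.exp (-2 * b * ((|m| * |m'| : ℝ) : ℂ)) := by rw [hb_def, abs_mul]; ring_nf
  rw [hexp]
  simp only [show (π : ℂ) * Complex.I * v = -b by rw [hb_def, neg_neg], ← sq_abs m,
    ← sq_abs m']
  refine ⟨integrable_exp_neg_half_mul_cexp_neg_mul hb hp hq,
    integrable_exp_half_mul_cexp_neg_mul hb hp hq, ?_, ?_⟩
  · rw [mul_assoc ((-Complex.I * v) ^ _), mul_integral_exp_neg_half_mul_cexp_neg_mul hb hp hq,
      ← mul_assoc, hroot, one_mul]
  · rw [mul_assoc ((-Complex.I * v) ^ _), mul_integral_exp_half_mul_cexp_neg_mul hb hp hq,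
      ← mul_assoc, hroot, one_mul]
end

section
/- Let N ≥ 1 and let T be a complex symmetric N×N matrix whose imaginary part Im T is positive definite (a point of the Siegel upper half-space), and denote by T̄ its entrywise complex conjugate. Then for all column vectors h₁, h₂ ∈ ℝ^N, the integral below converges absolutely and e^{−πi·h₁ᵗh₂}·∫_{ℝ^N} e^{πi·(xᵗTx − (x+h₁)ᵗT̄(x+h₁) − 2·xᵗh₂)} dx = (2^N·det(Im T))^{−1/2}·e^{−(π/2)·(Th₁+h₂)ᵗ·(Im T)^{−1}·(T̄h₁+h₂)}, where (2^N·det(Im T))^{−1/2} is the positive real square root (det(Im T) > 0). -/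
/-!
Writing `T = T̄ + 2i·Im T` and using the symmetry of `T̄`, the exponent of the integrand becomes
`-2π xᵗ(Im T)x - 2πi bᵗx - πi h₁ᵗT̄h₁` with `b = T̄h₁ + h₂`, so the integral is a Gaussian
Fourier integral. Substituting `x = My` with `Mᵗ(Im T)M = 1` (possible since `Im T = CᵗC`) splits
it into one-dimensional Gaussians and gives `(2^N det Im T)^{-1/2} e^{-(π/2) bᵗ(Im T)⁻¹b}`.
Finally `Th₁ + h₂ = b + 2i(Im T)h₁`, so the exponent on the right-hand side differs from
`-(π/2) bᵗ(Im T)⁻¹b` by exactly the phases `-πi h₁ᵗT̄h₁ - πi h₁ᵗh₂`.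
-/

open Real MeasureTheory Matrix Complex
open scoped ComplexConjugate MatrixOrder

namespace Matrix

variable {ι : Type*} [Fintype ι]

theorem sum_sum_mul_mul_eq_dotProduct_mulVec {R : Type*} [CommSemiring R]
    (M : Matrix ι ι R) (u v : ι → R) : ∑ i, ∑ j, u i * M i j * v j = u ⬝ᵥ M *ᵥ v := by
  simp only [dotProduct, mulVec, Finset.mul_sum]
  exact Finset.sum_congr rfl fun i _ => Finset.sum_congr rfl fun j _ => by ring

theorem IsSymm.dotProduct_mulVec_sub_dotProduct_mulVec_add {R : Type*} [CommRing R]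
    {A : Matrix ι ι R} (hA : A.IsSymm) (D : Matrix ι ι R) (x h k : ι → R) :
    x ⬝ᵥ (A + D) *ᵥ x - (x + h) ⬝ᵥ A *ᵥ (x + h) - 2 * (x ⬝ᵥ k) =
      x ⬝ᵥ D *ᵥ x - 2 * ((A *ᵥ h + k) ⬝ᵥ x) - h ⬝ᵥ A *ᵥ h := by
  have hswap : h ⬝ᵥ A *ᵥ x = x ⬝ᵥ A *ᵥ h := by
    rw [dotProduct_mulVec, ← mulVec_transpose, hA.eq, dotProduct_comm]
  rw [add_mulVec, mulVec_add, dotProduct_add, add_dotProduct, add_dotProduct, dotProduct_add,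
    dotProduct_add, hswap, dotProduct_comm _ x, dotProduct_comm k]
  ring

variable [DecidableEq ι]

theorem PosDef.exists_transpose_mul_mul_eq_one {S : Matrix ι ι ℝ} (hS : S.PosDef) :
    ∃ M : Matrix ι ι ℝ, Mᵀ * S * M = 1 := by
  obtain ⟨C, rfl⟩ := CStarAlgebra.nonneg_iff_eq_star_mul_self.mp hS.posSemidef.nonneg
  have hC : IsUnit C.det := by
    have hdet := hS.det_pos
    rw [star_eq_conjTranspose, det_mul, det_conjTranspose] at hdet
    exact (right_ne_zero_of_mul hdet.ne').isUnit
  refine ⟨C⁻¹, ?_⟩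
  rw [star_eq_conjTranspose, conjTranspose_eq_transpose_of_trivial, transpose_nonsing_inv,
    mul_assoc, mul_assoc, mul_nonsing_inv _ hC, mul_one,
    nonsing_inv_mul _ (by rwa [det_transpose])]

theorem det_ne_zero_of_transpose_mul_mul_eq_one {S M : Matrix ι ι ℝ} (hM : Mᵀ * S * M = 1) :
    M.det ≠ 0 := by
  intro h
  simpa [h] using congrArg det hM

variable {M : Matrix ι ι ℝ}

theorem measurableEmbedding_mulVec (hM : M.det ≠ 0) : MeasurableEmbedding (M *ᵥ ·) :=
  (M.toLinearEquiv' (M.invertibleOfIsUnitDet hM.isUnit)).toContinuousLinearEquiv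
    |>.toHomeomorph.measurableEmbedding

theorem map_mulVec_volume (hM : M.det ≠ 0) :
    Measure.map (M *ᵥ ·) volume = ENNReal.ofReal |M.det|⁻¹ • (volume : Measure (ι → ℝ)) := by
  rw [← abs_inv]
  exact Real.map_matrix_volume_pi_eq_smul_volume_pi hM

theorem integrable_comp_mulVec_iff {E : Type*} [NormedAddCommGroup E] (hM : M.det ≠ 0)
    {g : (ι → ℝ) → E} : Integrable (fun y => g (M *ᵥ y)) ↔ Integrable g := by
  rw [← Function.comp_def, ← (measurableEmbedding_mulVec hM).integrable_map_iff,
    map_mulVec_volume hM, integrable_smul_measure (by simpa using hM) ENNReal.ofReal_ne_top]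

theorem integral_comp_mulVec {E : Type*} [NormedAddCommGroup E] [NormedSpace ℝ E]
    (hM : M.det ≠ 0) (g : (ι → ℝ) → E) : ∫ y, g (M *ᵥ y) = |M.det|⁻¹ • ∫ x, g x := by
  rw [← (measurableEmbedding_mulVec hM).integral_map, map_mulVec_volume hM,
    integral_smul_measure, ENNReal.toReal_ofReal (by positivity)]

end Matrix

section Gaussian

variable {ι : Type*} [Fintype ι]

theorem Complex.ofReal_dotProduct_mulVec (S : Matrix ι ι ℝ) (x : ι → ℝ) :
    ((x ⬝ᵥ S *ᵥ x : ℝ) : ℂ) = (ofReal ∘ x) ⬝ᵥ S.map ofReal *ᵥ (ofReal ∘ x) := by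
  rw [← ofRealHom_eq_coe, RingHom.map_dotProduct]
  exact congrArg _ (funext (RingHom.map_mulVec ofRealHom S x))

theorem integrable_cexp_neg_dotProduct_self_add (b : ι → ℂ) :
    Integrable fun y : ι → ℝ => cexp (-((y ⬝ᵥ y : ℝ) : ℂ) + b ⬝ᵥ (ofReal ∘ y)) := by
  convert GaussianFourier.integrable_cexp_neg_sum_mul_add (b := fun _ => 1) (by simp) b using 4
  · simp [dotProduct, sq]
  · simp [dotProduct]

theorem integral_cexp_neg_dotProduct_self_add (b : ι → ℂ) :
    ∫ y : ι → ℝ, cexp (-((y ⬝ᵥ y : ℝ) : ℂ) + b ⬝ᵥ (ofReal ∘ y)) =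
      ((√π ^ Fintype.card ι : ℝ) : ℂ) * cexp (b ⬝ᵥ b / 4) := by
  have hsqrt : (π : ℂ) ^ (1 / 2 : ℂ) = (√π : ℝ) := by
    rw [Real.sqrt_eq_rpow, ofReal_cpow pi_pos.le]; norm_num
  convert GaussianFourier.integral_cexp_neg_sum_mul_add (b := fun _ => 1) (by simp) b using 1
  · congr 1 with y; simp [dotProduct, sq]
  · simp only [div_one, mul_one, Finset.prod_mul_distrib, Finset.prod_const, Finset.card_univ,
      hsqrt, ← Complex.exp_sum, ← Finset.sum_div, dotProduct, sq, ofReal_pow]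

variable [DecidableEq ι] {S : Matrix ι ι ℝ}

theorem neg_quadForm_add_comp_mulVec {M : Matrix ι ι ℝ} (hM : Mᵀ * S * M = 1) (b : ι → ℂ)
    (y : ι → ℝ) :
    -(((M *ᵥ y) ⬝ᵥ S *ᵥ (M *ᵥ y) : ℝ) : ℂ) + b ⬝ᵥ (ofReal ∘ (M *ᵥ y)) =
      -((y ⬝ᵥ y : ℝ) : ℂ) + ((M.map ofReal)ᵀ *ᵥ b) ⬝ᵥ (ofReal ∘ y) := by
  have hquad : (M *ᵥ y) ⬝ᵥ S *ᵥ (M *ᵥ y) = y ⬝ᵥ y := by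
    rw [mulVec_mulVec, dotProduct_mulVec, ← vecMul_transpose, vecMul_vecMul, ← mul_assoc, hM,
      vecMul_one]
  have hlin : ofReal ∘ (M *ᵥ y) = M.map ofReal *ᵥ (ofReal ∘ y) :=
    funext (RingHom.map_mulVec ofRealHom M y)
  rw [hquad, hlin, dotProduct_mulVec, mulVec_transpose]

theorem integrable_cexp_neg_quadForm_add (hS : S.PosDef) (b : ι → ℂ) :
    Integrable fun x : ι → ℝ => cexp (-((x ⬝ᵥ S *ᵥ x : ℝ) : ℂ) + b ⬝ᵥ (ofReal ∘ x)) := by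
  obtain ⟨M, hM⟩ := hS.exists_transpose_mul_mul_eq_one
  rw [← integrable_comp_mulVec_iff (det_ne_zero_of_transpose_mul_mul_eq_one hM)]
  simp only [neg_quadForm_add_comp_mulVec hM]
  exact integrable_cexp_neg_dotProduct_self_add _

theorem integral_cexp_neg_quadForm_add (hS : S.PosDef) (b : ι → ℂ) :
    ∫ x : ι → ℝ, cexp (-((x ⬝ᵥ S *ᵥ x : ℝ) : ℂ) + b ⬝ᵥ (ofReal ∘ x)) =
      (√(π ^ Fintype.card ι / S.det) : ℝ) * cexp (b ⬝ᵥ S⁻¹.map ofReal *ᵥ b / 4) := by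
  obtain ⟨M, hM⟩ := hS.exists_transpose_mul_mul_eq_one
  have hMdet := det_ne_zero_of_transpose_mul_mul_eq_one hM
  have hSinv : S⁻¹ = M * Mᵀ :=
    inv_eq_left_inv (by rw [mul_assoc]; exact mul_eq_one_comm.mp hM)
  have hSdet : S.det = (M.det ^ 2)⁻¹ := by
    refine eq_inv_of_mul_eq_one_left ?_
    rw [← det_one (n := ι), ← hM, det_mul, det_mul, det_transpose]
    ring
  have hmap : (M * Mᵀ).map ofReal = M.map ofReal * (M.map ofReal)ᵀ := by
    rw [← transpose_map]; exact Matrix.map_mul (f := ofRealHom)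
  have hsubst := integral_comp_mulVec hMdet
    (fun x : ι → ℝ => cexp (-((x ⬝ᵥ S *ᵥ x : ℝ) : ℂ) + b ⬝ᵥ (ofReal ∘ x)))
  simp only [neg_quadForm_add_comp_mulVec hM, integral_cexp_neg_dotProduct_self_add] at hsubst
  rw [eq_inv_smul_iff₀ (by positivity)] at hsubst
  rw [← hsubst, real_smul, ← mul_assoc, ← ofReal_mul, hSinv, hSdet, hmap,
    ← mulVec_mulVec, dotProduct_mulVec b, ← mulVec_transpose]
  congr 2
  rw [div_inv_eq_mul, eq_comm, Real.sqrt_eq_iff_mul_self_eq_of_pos (by positivity),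
    mul_mul_mul_comm, abs_mul_abs_self, ← mul_pow, Real.mul_self_sqrt pi_pos.le]
  ring

theorem integrable_and_integral_cexp_neg_two_pi_quadForm_sub (hS : S.PosDef) (b : ι → ℂ) :
    Integrable (fun x : ι → ℝ =>
        cexp (-(2 * π) * ((x ⬝ᵥ S *ᵥ x : ℝ) : ℂ) - 2 * π * I * (b ⬝ᵥ (ofReal ∘ x)))) ∧
      ∫ x : ι → ℝ, cexp (-(2 * π) * ((x ⬝ᵥ S *ᵥ x : ℝ) : ℂ) - 2 * π * I * (b ⬝ᵥ (ofReal ∘ x))) =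
        (((2 ^ Fintype.card ι * S.det) ^ (-(1 : ℝ) / 2) : ℝ) : ℂ) *
          cexp (-π / 2 * (b ⬝ᵥ S⁻¹.map ofReal *ᵥ b)) := by
  have h2π : (0 : ℝ) < 2 * π := by positivity
  have hscaled : ((2 * π) • S).PosDef := hS.smul h2π
  have hinv : ((2 * π) • S)⁻¹ = (2 * π)⁻¹ • S⁻¹ :=
    inv_eq_left_inv (by rw [smul_mul_smul_comm, inv_mul_cancel₀ h2π.ne',
      nonsing_inv_mul _ hS.det_pos.ne'.isUnit, one_smul])
  have hintegrand : (fun x : ι → ℝ =>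
      cexp (-(2 * π) * ((x ⬝ᵥ S *ᵥ x : ℝ) : ℂ) - 2 * π * I * (b ⬝ᵥ (ofReal ∘ x)))) =
      fun x => cexp (-((x ⬝ᵥ ((2 * π) • S) *ᵥ x : ℝ) : ℂ) + (-(2 * π * I) • b) ⬝ᵥ (ofReal ∘ x)) := by
    funext x
    rw [smul_mulVec, dotProduct_smul, smul_dotProduct, smul_eq_mul, smul_eq_mul, ofReal_mul]
    push_cast
    ring_nf
  refine ⟨hintegrand ▸ integrable_cexp_neg_quadForm_add hscaled _, ?_⟩
  rw [hintegrand, integral_cexp_neg_quadForm_add hscaled, det_smul, hinv]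
  congr 2
  · have hdet := hS.det_pos
    rw [mul_pow, mul_comm (2 ^ _), mul_assoc, div_mul_cancel_left₀ (by positivity),
      Real.sqrt_inv, Real.sqrt_eq_rpow, ← Real.rpow_neg (by positivity), neg_div]
  · have hmap : ((2 * π)⁻¹ • S⁻¹).map ofReal = ((2 * π : ℂ)⁻¹) • S⁻¹.map ofReal := by
      ext; simp
    rw [hmap, smul_mulVec, mulVec_smul, dotProduct_smul, smul_dotProduct, dotProduct_smul]
    simp only [smul_eq_mul]
    field_simp
    rw [I_sq]
    ring

end Gaussian

section SiegelGaussian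

theorem Matrix.map_conj_add_two_I_smul_map_im {ι : Type*} (T : Matrix ι ι ℂ) :
    T.map conj + (2 * I) • (T.map im).map ofReal = T := by
  ext i j
  apply Complex.ext
  · simp
  · simp; ring

variable {ι : Type*} [Fintype ι] {T : Matrix ι ι ℂ}

theorem Matrix.IsSymm.overlap_exponent_eq (hT : T.IsSymm) (x h₁ h₂ : ι → ℝ) :
    (π : ℂ) * I * ((∑ i, ∑ j, T i j * (x i : ℂ) * (x j : ℂ)) -
        (∑ i, ∑ j, T.map conj i j * ((x i : ℂ) + (h₁ i : ℂ)) * ((x j : ℂ) + (h₁ j : ℂ))) -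
        2 * ∑ i, (x i : ℂ) * (h₂ i : ℂ)) =
      -(2 * π) * ((x ⬝ᵥ T.map im *ᵥ x : ℝ) : ℂ)
        - 2 * π * I * ((T.map conj *ᵥ (ofReal ∘ h₁) + ofReal ∘ h₂) ⬝ᵥ (ofReal ∘ x))
        + -π * I * ((ofReal ∘ h₁) ⬝ᵥ T.map conj *ᵥ (ofReal ∘ h₁)) := by
  have hquad : ∑ i, ∑ j, T i j * (x i : ℂ) * (x j : ℂ) = (ofReal ∘ x) ⬝ᵥ T *ᵥ (ofReal ∘ x) := by
    simp only [mul_comm (T _ _), sum_sum_mul_mul_eq_dotProduct_mulVec]; rfl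
  have hshifted : ∑ i, ∑ j, T.map conj i j * ((x i : ℂ) + (h₁ i : ℂ)) * ((x j : ℂ) + (h₁ j : ℂ)) =
      (ofReal ∘ x + ofReal ∘ h₁) ⬝ᵥ T.map conj *ᵥ (ofReal ∘ x + ofReal ∘ h₁) := by
    simp only [mul_comm (T.map conj _ _), sum_sum_mul_mul_eq_dotProduct_mulVec]; rfl
  have hlin : ∑ i, (x i : ℂ) * (h₂ i : ℂ) = (ofReal ∘ x) ⬝ᵥ (ofReal ∘ h₂) := rfl
  rw [hquad, hshifted, hlin]
  nth_rewrite 1 [← T.map_conj_add_two_I_smul_map_im]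
  rw [(hT.map conj).dotProduct_mulVec_sub_dotProduct_mulVec_add, smul_mulVec, dotProduct_smul,
    smul_eq_mul, ofReal_dotProduct_mulVec]
  linear_combination (2 * π * (ofReal ∘ x ⬝ᵥ (T.map im).map ofReal *ᵥ ofReal ∘ x)) * I_sq

theorem Matrix.IsSymm.theta_exponent_eq [DecidableEq ι] (hT : T.IsSymm)
    (hdet : IsUnit (T.map im).det) (h₁ h₂ : ι → ℝ) :
    ∑ i, ∑ j, ((∑ k, T i k * (h₁ k : ℂ)) + (h₂ i : ℂ)) * (((T.map im)⁻¹ i j : ℝ) : ℂ) *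
        ((∑ k, T.map conj j k * (h₁ k : ℂ)) + (h₂ j : ℂ)) =
      (T.map conj *ᵥ (ofReal ∘ h₁) + ofReal ∘ h₂) ⬝ᵥ (T.map im)⁻¹.map ofReal *ᵥ
          (T.map conj *ᵥ (ofReal ∘ h₁) + ofReal ∘ h₂) +
        2 * I * ((ofReal ∘ h₁) ⬝ᵥ T.map conj *ᵥ (ofReal ∘ h₁) + (ofReal ∘ h₁) ⬝ᵥ (ofReal ∘ h₂)) := by
  set b := T.map conj *ᵥ (ofReal ∘ h₁) + ofReal ∘ h₂
  have hsum : ∑ i, ∑ j, ((∑ k, T i k * (h₁ k : ℂ)) + (h₂ i : ℂ)) * (((T.map im)⁻¹ i j : ℝ) : ℂ) *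
      ((∑ k, T.map conj j k * (h₁ k : ℂ)) + (h₂ j : ℂ)) =
      (T *ᵥ (ofReal ∘ h₁) + ofReal ∘ h₂) ⬝ᵥ (T.map im)⁻¹.map ofReal *ᵥ b :=
    sum_sum_mul_mul_eq_dotProduct_mulVec _ _ _
  have hinv : (T.map im).map ofReal * (T.map im)⁻¹.map ofReal = 1 := by
    have h := congrArg (Matrix.map · ofRealHom) (mul_nonsing_inv _ hdet)
    rwa [Matrix.map_mul, Matrix.map_one _ (map_zero _) (map_one _)] at h
  have hcross : ((T.map im).map ofReal *ᵥ (ofReal ∘ h₁)) ⬝ᵥ (T.map im)⁻¹.map ofReal *ᵥ b =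
      (ofReal ∘ h₁) ⬝ᵥ b := by
    rw [← vecMul_transpose, ← dotProduct_mulVec, ((hT.map im).map ofReal).eq, mulVec_mulVec,
      hinv, one_mulVec]
  have hsplit : T *ᵥ (ofReal ∘ h₁) + ofReal ∘ h₂ =
      b + (2 * I) • ((T.map im).map ofReal *ᵥ (ofReal ∘ h₁)) := by
    nth_rewrite 1 [← T.map_conj_add_two_I_smul_map_im]
    rw [add_mulVec, smul_mulVec, add_right_comm]
  rw [hsum, hsplit, add_dotProduct, smul_dotProduct, hcross, smul_eq_mul, dotProduct_add]

end SiegelGaussian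

theorem stmt_19_general (N : ℕ) (T : Matrix (Fin N) (Fin N) ℂ)
    (hsymm : T.IsSymm)
    (hpos : (Matrix.of fun i j => (T i j).im : Matrix (Fin N) (Fin N) ℝ).PosDef)
    (h₁ h₂ : Fin N → ℝ) :
    let Tbar : Matrix (Fin N) (Fin N) ℂ := Matrix.of fun i j => (starRingEnd ℂ) (T i j)
    let ImT : Matrix (Fin N) (Fin N) ℝ := Matrix.of fun i j => (T i j).im
    let f : (Fin N → ℝ) → ℂ := fun x =>
      Complex.exp ((π : ℂ) * Complex.I *
        ((∑ i, ∑ j, T i j * (x i : ℂ) * (x j : ℂ)) -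
          (∑ i, ∑ j, Tbar i j * ((x i : ℂ) + (h₁ i : ℂ)) * ((x j : ℂ) + (h₁ j : ℂ))) -
          2 * ∑ i, (x i : ℂ) * (h₂ i : ℂ)))
    Integrable f ∧
    Complex.exp (-(π : ℂ) * Complex.I * ∑ i, (h₁ i : ℂ) * (h₂ i : ℂ)) *
        (∫ x : Fin N → ℝ, f x) =
      ((((2 : ℝ) ^ N * ImT.det) ^ (-(1 : ℝ) / 2) : ℝ) : ℂ) *
        Complex.exp (-(π : ℂ) / 2 * ∑ i, ∑ j,
          ((∑ k, T i k * (h₁ k : ℂ)) + (h₂ i : ℂ)) * ((ImT⁻¹ i j : ℝ) : ℂ) *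
            ((∑ k, Tbar j k * (h₁ k : ℂ)) + (h₂ j : ℂ))) := by
  intro Tbar ImT f
  have hTbar : Tbar = T.map conj := rfl
  have hImT : ImT = T.map im := rfl
  have hS : (T.map im).PosDef := hpos
  set b : Fin N → ℂ := T.map conj *ᵥ (ofReal ∘ h₁) + ofReal ∘ h₂
  have hf : f = fun x => cexp (-π * I * ((ofReal ∘ h₁) ⬝ᵥ T.map conj *ᵥ (ofReal ∘ h₁))) *
      cexp (-(2 * π) * ((x ⬝ᵥ T.map im *ᵥ x : ℝ) : ℂ) - 2 * π * I * (b ⬝ᵥ (ofReal ∘ x))) := by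
    funext x
    rw [← Complex.exp_add, add_comm]
    exact congrArg cexp (hsymm.overlap_exponent_eq x h₁ h₂)
  obtain ⟨hint, hval⟩ := integrable_and_integral_cexp_neg_two_pi_quadForm_sub hS b
  refine ⟨hf ▸ hint.const_mul _, ?_⟩
  have hdot : ∑ i, (h₁ i : ℂ) * (h₂ i : ℂ) = (ofReal ∘ h₁) ⬝ᵥ (ofReal ∘ h₂) := rfl
  rw [hf, integral_const_mul, hval, hTbar, hImT, hsymm.theta_exponent_eq hS.det_pos.ne'.isUnit,
    Fintype.card_fin, hdot, mul_left_comm (cexp _) (ofReal _), mul_left_comm (cexp _) (ofReal _),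
    ← Complex.exp_add, ← Complex.exp_add]
  congr 2
  ring

/-- the Gaussian coefficient computation (3.24): for `T` in the
Siegel upper half-space (`T` symmetric `N×N` complex with `Im T` positive definite)
and `h₁, h₂ ∈ ℝ^N`:
`e^{−πi h₁ᵗh₂} ∫_{ℝ^N} e^{πi(xᵗTx − (x+h₁)ᵗT̄(x+h₁) − 2xᵗh₂)} dx
 = (2^N det Im T)^{−1/2} e^{−(π/2)(Th₁+h₂)ᵗ(Im T)⁻¹(T̄h₁+h₂)}`,
the integral converging absolutely. -/
theorem stmt_19 (N : ℕ) (hN : 1 ≤ N) (T : Matrix (Fin N) (Fin N) ℂ)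
    (hsymm : T.IsSymm)
    (hpos : (Matrix.of fun i j => (T i j).im : Matrix (Fin N) (Fin N) ℝ).PosDef)
    (h₁ h₂ : Fin N → ℝ) :
    let Tbar : Matrix (Fin N) (Fin N) ℂ := Matrix.of fun i j => (starRingEnd ℂ) (T i j)
    let ImT : Matrix (Fin N) (Fin N) ℝ := Matrix.of fun i j => (T i j).im
    let f : (Fin N → ℝ) → ℂ := fun x =>
      Complex.exp ((π : ℂ) * Complex.I *
        ((∑ i, ∑ j, T i j * (x i : ℂ) * (x j : ℂ)) -
          (∑ i, ∑ j, Tbar i j * ((x i : ℂ) + (h₁ i : ℂ)) * ((x j : ℂ) + (h₁ j : ℂ))) -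
          2 * ∑ i, (x i : ℂ) * (h₂ i : ℂ)))
    Integrable f ∧
    Complex.exp (-(π : ℂ) * Complex.I * ∑ i, (h₁ i : ℂ) * (h₂ i : ℂ)) *
        (∫ x : Fin N → ℝ, f x) =
      ((((2 : ℝ) ^ N * ImT.det) ^ (-(1 : ℝ) / 2) : ℝ) : ℂ) *
        Complex.exp (-(π : ℂ) / 2 * ∑ i, ∑ j,
          ((∑ k, T i k * (h₁ k : ℂ)) + (h₂ i : ℂ)) * ((ImT⁻¹ i j : ℝ) : ℂ) *
            ((∑ k, Tbar j k * (h₁ k : ℂ)) + (h₂ j : ℂ))) :=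
  stmt_19_general N T hsymm hpos h₁ h₂
end
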